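/- For every ρ > 0 and every real x ≤ 0 with x ≠ −sinh ρ, setting u = −U_ρ(−x) = −((−x)·sinh ρ + 1)/(x + sinh ρ), one has u ≠ x, and the geodesic γ(x, u) with ideal endpoints x and u is tangent to the hyperbolic disc B_ρ(i); that is, inf_{z ∈ γ(x,u)} dist(z, i) = ρ. -/

import Mathlib

open UpperHalfPlane MeasureTheory

/-- The complete hyperbolic geodesic of the upper half-plane with ideal endpoints `a` and `b`:
the Euclidean semicircle `{z ∈ ℍ : |z − (a+b)/2| = |a−b|/2}`. -/
noncomputable def geodesic (a b : ℝ) : Set ℍ :=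
  {z : ℍ | ‖(z : ℂ) - (((a + b) / 2 : ℝ) : ℂ)‖ = |a - b| / 2}

/-- The geodesic `γ(a,b)` is tangent to the hyperbolic disc `B_ρ(i)`:
the infimum of the hyperbolic distance from points of the geodesic to `i` equals `ρ`. -/
def TangentToDisc (a b ρ : ℝ) : Prop :=
  sInf ((fun z : ℍ => dist z UpperHalfPlane.I) '' geodesic a b) = ρ

/-- The geodesic `γ(a,b)` intersects the closed hyperbolic disc `B̄_r(i)`. -/
def MeetsClosedDisc (a b r : ℝ) : Prop :=
  ∃ z ∈ geodesic a b, dist z UpperHalfPlane.I ≤ r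

/-!
Write the geodesic `γ(a,b)` as the circle with centre `c = (a+b)/2` and radius `R = (a-b)/2`, and
let `C = cosh ρ`. Since `cosh dist(z, i) = (|z|² + 1) / (2 Im z)`, tangency to `B_ρ(i)` says that
`|z|² + 1 - 2C Im z ≥ 0` on the circle, with equality somewhere. Under the relation
`(c² + R² + 1)² = 4R²(C² + c²)` this expression is, up to the factor `R²`, a perfect square, whose
zero on the circle is explicit. For `u = -U_ρ(-x)` the relation is a rational identity in `x` and
`sinh ρ`, using `cosh² ρ = 1 + sinh² ρ`.
-/

lemma mem_geodesic_iff (a b : ℝ) (z : ℍ) :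
    z ∈ geodesic a b ↔ (z.re - (a + b) / 2) ^ 2 + z.im ^ 2 = ((a - b) / 2) ^ 2 := by
  have hnorm : ‖(z : ℂ) - (((a + b) / 2 : ℝ) : ℂ)‖ =
      √((z.re - (a + b) / 2) ^ 2 + z.im ^ 2) := by
    simp only [Complex.norm_def, Complex.normSq_apply, Complex.sub_re, Complex.sub_im,
      Complex.ofReal_re, Complex.ofReal_im, coe_re, coe_im, sub_zero, sq]
  have hrad : |a - b| / 2 = √(((a - b) / 2) ^ 2) := by
    rw [Real.sqrt_sq_eq_abs, abs_div, abs_two]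
  rw [geodesic, Set.mem_ofPred_eq, hnorm, hrad, Real.sqrt_inj (by positivity) (sq_nonneg _)]

lemma UpperHalfPlane.cosh_dist_I (z : ℍ) :
    Real.cosh (dist z I) = (z.re ^ 2 + z.im ^ 2 + 1) / (2 * z.im) := by
  rw [cosh_dist', I_re, I_im]
  ring_nf

section Tangency

variable {c R C : ℝ}

lemma cosh_le_cosh_dist_I_of_sq_eq
    (hcR : (c ^ 2 + R ^ 2 + 1) ^ 2 = 4 * R ^ 2 * (C ^ 2 + c ^ 2))
    {z : ℍ} (hz : (z.re - c) ^ 2 + z.im ^ 2 = R ^ 2) :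
    C ≤ Real.cosh (dist z I) := by
  set p := z.re
  set q := z.im
  have hq : 0 < q := z.im_pos
  have hR : 0 < R ^ 2 := by nlinarith [sq_nonneg (p - c)]
  have hsq : R ^ 2 * ((p ^ 2 + q ^ 2 + 1) ^ 2 - (2 * C * q) ^ 2) =
      ((c ^ 2 + R ^ 2 + 1) * (p - c) + 2 * c * R ^ 2) ^ 2 := by
    linear_combination (R ^ 2 - (p - c) ^ 2) * hcR +
      R ^ 2 * (2 * (c ^ 2 + R ^ 2 + 1) + 4 * c * (p - c) + ((p - c) ^ 2 + q ^ 2 - R ^ 2)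
        - 4 * C ^ 2) * hz
  have hdiff : (2 * C * q) ^ 2 ≤ (p ^ 2 + q ^ 2 + 1) ^ 2 := by
    nlinarith [sq_nonneg ((c ^ 2 + R ^ 2 + 1) * (p - c) + 2 * c * R ^ 2)]
  rw [cosh_dist_I, le_div_iff₀ (by positivity)]
  nlinarith

lemma exists_cosh_dist_I_eq (hC : 0 < C) (hR : R ≠ 0)
    (hcR : (c ^ 2 + R ^ 2 + 1) ^ 2 = 4 * R ^ 2 * (C ^ 2 + c ^ 2)) :
    ∃ z : ℍ, (z.re - c) ^ 2 + z.im ^ 2 = R ^ 2 ∧ Real.cosh (dist z I) = C := by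
  set M := c ^ 2 + R ^ 2 + 1 with hM
  have hMpos : 0 < M := by positivity
  have hq : 0 < 2 * C * R ^ 2 / M := by positivity
  -- the zero of the square in `cosh_le_cosh_dist_I_of_sq_eq`: `Re z - c = -2cR² / M`
  refine ⟨mk ⟨c - 2 * c * R ^ 2 / M, 2 * C * R ^ 2 / M⟩ hq, ?_, ?_⟩
  · simp only [mk_re, mk_im]
    field_simp
    linear_combination (-R ^ 2) * hcR
  · rw [cosh_dist_I, mk_re, mk_im]
    field_simp
    linear_combination (M - R ^ 2) * hcR - M ^ 2 * hM

end Tangency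

lemma tangentToDisc_of_sq_eq {a b ρ : ℝ} (hρ : 0 ≤ ρ) (hab : a ≠ b)
    (h : (((a + b) / 2) ^ 2 + ((a - b) / 2) ^ 2 + 1) ^ 2 =
      4 * ((a - b) / 2) ^ 2 * (Real.cosh ρ ^ 2 + ((a + b) / 2) ^ 2)) :
    TangentToDisc a b ρ := by
  have hR : (a - b) / 2 ≠ 0 := div_ne_zero (sub_ne_zero.mpr hab) two_ne_zero
  obtain ⟨z, hz, hcosh⟩ := exists_cosh_dist_I_eq (Real.cosh_pos ρ) hR h
  refine IsLeast.csInf_eq ⟨⟨z, (mem_geodesic_iff a b z).mpr hz, ?_⟩, ?_⟩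
  · exact Real.cosh_injOn dist_nonneg hρ hcosh
  · rintro _ ⟨w, hw, rfl⟩
    have hle := cosh_le_cosh_dist_I_of_sq_eq h ((mem_geodesic_iff a b w).mp hw)
    rwa [Real.cosh_le_cosh, abs_of_nonneg hρ, abs_of_nonneg dist_nonneg] at hle

theorem tangent_U_neg_general (ρ : ℝ) (hρ : 0 < ρ) (x : ℝ) (hxρ : x ≠ -Real.sinh ρ) :
    -((-x * Real.sinh ρ + 1) / (x + Real.sinh ρ)) ≠ x ∧
      TangentToDisc x (-((-x * Real.sinh ρ + 1) / (x + Real.sinh ρ))) ρ := by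
  set s := Real.sinh ρ
  have hxs : x + s ≠ 0 := fun h => hxρ (by linarith)
  set u := -((-x * s + 1) / (x + s))
  have hxu : x - u = (x ^ 2 + 1) / (x + s) := by
    simp only [u]
    field_simp
    ring
  have hne : u ≠ x := by
    rw [ne_comm, ← sub_ne_zero, hxu]
    exact div_ne_zero (by positivity) hxs
  refine ⟨hne, tangentToDisc_of_sq_eq hρ.le hne.symm ?_⟩
  have hcosh : Real.cosh ρ ^ 2 = 1 + s ^ 2 := by rw [Real.cosh_sq]; ring
  rw [hcosh]
  simp only [u]
  field_simp
  ring

/-- For every ρ > 0 and every real x ≤ 0 with x ≠ −sinh ρ, setting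
u = −U_ρ(−x) = −((−x)·sinh ρ + 1)/(x + sinh ρ), one has u ≠ x, and the geodesic
γ(x, u) is tangent to the hyperbolic disc B_ρ(i). -/
theorem tangent_U_neg (ρ : ℝ) (hρ : 0 < ρ) (x : ℝ) (hx : x ≤ 0) (hxρ : x ≠ -Real.sinh ρ) :
    -((-x * Real.sinh ρ + 1) / (x + Real.sinh ρ)) ≠ x ∧
      TangentToDisc x (-((-x * Real.sinh ρ + 1) / (x + Real.sinh ρ))) ρ :=
  tangent_U_neg_general ρ hρ x hxρ
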